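/- Let N ≥ 1, let a₁,…,a_N be distinct points of the unit circle {z ∈ ℂ : |z| = 1}, and let d₁,…,d_N ∈ ℤ ∖ {0} satisfy Σ_{j=1}^N d_j = 2. Then for every b on the unit circle with b ∉ {a₁,…,a_N}, the square ( b·∏_{j=1}^N ( |b−a_j|/(b−a_j) )^{d_j} )² equals ∏_{j=1}^N a_j^{−d_j}; in particular this square does not depend on b, so for any two such points b, b̃ one has b·∏_{j=1}^N (|b−a_j|/(b−a_j))^{d_j} = ± b̃·∏_{j=1}^N (|b̃−a_j|/(b̃−a_j))^{d_j}. -/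

import Mathlib

/-!
For `a`, `b` on the unit circle, `conj a = a⁻¹` and `conj b = b⁻¹`, so
`|b - a|² = (b - a)(b⁻¹ - a⁻¹) = -(b - a)² / (a b)`: the unit number `|b - a| / (b - a)`
squares to `-(a b)⁻¹`. After squaring, the `j`-th factor thus contributes
`(-b⁻¹)^{d_j} a_j^{-d_j}`, and since `∑ d_j = 2` the powers of `-b⁻¹` combine to `b⁻²`,
which cancels the `b²` in front.
-/

open Finset

theorem Finset.prod_zpow_eq_zpow_sum₀ {ι G₀ : Type*} [CommGroupWithZero G₀] (s : Finset ι)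
    (f : ι → ℤ) {c : G₀} (hc : c ≠ 0) : ∏ i ∈ s, c ^ f i = c ^ ∑ i ∈ s, f i := by
  classical
  induction s using Finset.induction with
  | empty => simp
  | insert x s hx ih => rw [prod_insert hx, sum_insert hx, zpow_add₀ hc, ih]

theorem Complex.ofReal_norm_sub_div_sub_sq {a b : ℂ} (ha : ‖a‖ = 1) (hb : ‖b‖ = 1)
    (hab : b ≠ a) : ((‖b - a‖ : ℂ) / (b - a)) ^ 2 = -(a * b)⁻¹ := by
  have ha0 : a ≠ 0 := norm_ne_zero_iff.mp (by simp [ha])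
  have hb0 : b ≠ 0 := norm_ne_zero_iff.mp (by simp [hb])
  have hba : b - a ≠ 0 := sub_ne_zero.mpr hab
  have hnorm : (‖b - a‖ : ℂ) ^ 2 = (b - a) * (b⁻¹ - a⁻¹) := by
    rw [inv_eq_conj ha, inv_eq_conj hb, ← map_sub, mul_conj']
  rw [div_pow, hnorm]
  field_simp
  ring

theorem sq_mul_prod_zpow_eq_prod_zpow_neg {ι K : Type*} [Field K] (s : Finset ι)
    {a u : ι → K} {b : K} (d : ι → ℤ) (hb : b ≠ 0)
    (hu : ∀ i ∈ s, u i ^ 2 = -(a i * b)⁻¹)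
    (hd : ∑ i ∈ s, d i = 2) : (b * ∏ i ∈ s, u i ^ d i) ^ 2 = ∏ i ∈ s, a i ^ (-d i) := by
  have hfactor : ∀ i ∈ s, (u i ^ d i) ^ 2 = (-b⁻¹) ^ d i * a i ^ (-d i) := by
    intro i hi
    rw [← zpow_natCast, ← zpow_mul, mul_comm, zpow_mul, zpow_natCast, hu i hi,
      mul_comm (a i), mul_inv, ← neg_mul, mul_zpow, inv_zpow']
  calc (b * ∏ i ∈ s, u i ^ d i) ^ 2
      = b ^ 2 * ((-b⁻¹) ^ (∑ i ∈ s, d i) * ∏ i ∈ s, a i ^ (-d i)) := by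
        rw [mul_pow, ← prod_pow, prod_congr rfl hfactor, prod_mul_distrib,
          prod_zpow_eq_zpow_sum₀ _ _ (neg_ne_zero.mpr (inv_ne_zero hb))]
    _ = ∏ i ∈ s, a i ^ (-d i) := by
        rw [hd, zpow_ofNat, neg_sq, ← mul_assoc, ← mul_pow, mul_inv_cancel₀ hb, one_pow,
          one_mul]

theorem stmt_1_general (N : ℕ) (a : Fin N → ℂ)
    (haU : ∀ j, ‖a j‖ = 1)
    (d : Fin N → ℤ) (hsum : ∑ j, d j = 2) :
    (∀ b : ℂ, ‖b‖ = 1 → (∀ j, b ≠ a j) →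
      (b * ∏ j, ((‖b - a j‖ : ℂ) / (b - a j)) ^ (d j)) ^ 2
        = ∏ j, (a j) ^ (-d j)) ∧
    (∀ b b' : ℂ, ‖b‖ = 1 → ‖b'‖ = 1 →
      (∀ j, b ≠ a j) → (∀ j, b' ≠ a j) →
      (b * ∏ j, ((‖b - a j‖ : ℂ) / (b - a j)) ^ (d j)
          = b' * ∏ j, ((‖b' - a j‖ : ℂ) / (b' - a j)) ^ (d j)) ∨
      (b * ∏ j, ((‖b - a j‖ : ℂ) / (b - a j)) ^ (d j)
          = -(b' * ∏ j, ((‖b' - a j‖ : ℂ) / (b' - a j)) ^ (d j)))) := by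
  have hsq : ∀ b : ℂ, ‖b‖ = 1 → (∀ j, b ≠ a j) →
      (b * ∏ j, ((‖b - a j‖ : ℂ) / (b - a j)) ^ (d j)) ^ 2 = ∏ j, (a j) ^ (-d j) :=
    fun b hb hba => sq_mul_prod_zpow_eq_prod_zpow_neg _ d (norm_ne_zero_iff.mp (by simp [hb]))
      (fun j _ => Complex.ofReal_norm_sub_div_sub_sq (haU j) hb (hba j)) hsum
  exact ⟨hsq, fun b b' hb hb' hba hb'a =>
    sq_eq_sq_iff_eq_or_eq_neg.mp ((hsq b hb hba).trans (hsq b' hb' hb'a).symm)⟩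

/-- Uniqueness (up to sign) of the canonical harmonic map formula on the
unit disk: for distinct points `a₁,…,a_N` on the unit circle with nonzero
integer multiplicities summing to `2`, the square of
`b ∏_j (|b-a_j|/(b-a_j))^{d_j}` equals `∏_j a_j^{-d_j}`, hence does not depend
on the point `b` on the circle, so the quantity itself is determined up to sign. -/
theorem stmt_1 (N : ℕ) (hN : 1 ≤ N) (a : Fin N → ℂ) (ha : Function.Injective a)
    (haU : ∀ j, ‖a j‖ = 1)
    (d : Fin N → ℤ) (hd : ∀ j, d j ≠ 0) (hsum : ∑ j, d j = 2) :
    (∀ b : ℂ, ‖b‖ = 1 → (∀ j, b ≠ a j) →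
      (b * ∏ j, ((‖b - a j‖ : ℂ) / (b - a j)) ^ (d j)) ^ 2
        = ∏ j, (a j) ^ (-d j)) ∧
    (∀ b b' : ℂ, ‖b‖ = 1 → ‖b'‖ = 1 →
      (∀ j, b ≠ a j) → (∀ j, b' ≠ a j) →
      (b * ∏ j, ((‖b - a j‖ : ℂ) / (b - a j)) ^ (d j)
          = b' * ∏ j, ((‖b' - a j‖ : ℂ) / (b' - a j)) ^ (d j)) ∨
      (b * ∏ j, ((‖b - a j‖ : ℂ) / (b - a j)) ^ (d j)
          = -(b' * ∏ j, ((‖b' - a j‖ : ℂ) / (b' - a j)) ^ (d j)))) :=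
  stmt_1_general N a haU d hsum
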